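/- arXiv:2505.09842 — 3 statements merged into one kernel-verified Lean document; each statement's English description precedes it below -/
import Mathlib

section
/- Let v be a valuation on a superring R. Then every v-convex ideal 𝔞 of A_v is ℤ₂-graded, i.e., 𝔞 = (𝔞 ∩ R₀) ⊕ (𝔞 ∩ R₁); moreover, the set of v-convex ideals of A_v is totally ordered by inclusion: for any two v-convex ideals 𝔞, 𝔟 of A_v, either 𝔞 ⊆ 𝔟 or 𝔟 ⊆ 𝔞. -/
universe u

/-- A superring: a `ZMod 2`-graded ring `R = R₀ ⊕ R₁` which is supercommutative
(`R₀` is central and every odd element squares to zero). -/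
structure IsSuperring {R : Type*} [Ring R] (𝒜 : ZMod 2 → AddSubgroup R) : Prop where
  one_mem : (1 : R) ∈ 𝒜 0
  mul_mem : ∀ {i j : ZMod 2} {x y : R}, x ∈ 𝒜 i → y ∈ 𝒜 j → x * y ∈ 𝒜 (i + j)
  decompose : ∀ x : R, ∃ x0 ∈ 𝒜 0, ∃ x1 ∈ 𝒜 1, x = x0 + x1
  unique_decomp : ∀ x0 ∈ 𝒜 0, ∀ x1 ∈ 𝒜 1, x0 + x1 = 0 → x0 = 0 ∧ x1 = 0
  even_central : ∀ x ∈ 𝒜 0, ∀ y : R, x * y = y * x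
  odd_sq : ∀ x ∈ 𝒜 1, x * x = 0

/-- A set is `ℤ₂`-graded (a "superset"): every element decomposes into an even and
an odd homogeneous component, both belonging to the set. -/
def IsGradedSet {R : Type*} [Ring R] (𝒜 : ZMod 2 → AddSubgroup R) (I : Set R) : Prop :=
  ∀ x ∈ I, ∃ x0 ∈ 𝒜 0, ∃ x1 ∈ 𝒜 1, x0 ∈ I ∧ x1 ∈ I ∧ x = x0 + x1

/-- A (Manis) valuation on a ring `R`: a surjective map `v : R → Γ ∪ {∞}`
(`∞ = ⊤` is absorbing and greater than every element of the totally ordered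
abelian group `Γ`) with `v 0 = ∞`, `v 1 = 0`, `v (x*y) = v x + v y` and
`v (x+y) ≥ min (v x) (v y)`. -/
structure IsValuation {R : Type*} [Ring R] {Γ : Type*} [AddCommGroup Γ] [LinearOrder Γ] [IsOrderedAddMonoid Γ]
    (v : R → WithTop Γ) : Prop where
  surjective : Function.Surjective v
  map_zero : v 0 = ⊤
  map_one : v 1 = 0
  map_mul : ∀ x y : R, v (x * y) = v x + v y
  min_le_add : ∀ x y : R, min (v x) (v y) ≤ v (x + y)

/-- `A_v = {x : v x ≥ 0}`. -/
def valRing {R : Type*} [Ring R] {Γ : Type*} [AddCommGroup Γ] [LinearOrder Γ] [IsOrderedAddMonoid Γ]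
    (v : R → WithTop Γ) : Set R := {x : R | 0 ≤ v x}

/-- `𝔭_v = {x : v x > 0}`. -/
def valIdeal {R : Type*} [Ring R] {Γ : Type*} [AddCommGroup Γ] [LinearOrder Γ] [IsOrderedAddMonoid Γ]
    (v : R → WithTop Γ) : Set R := {x : R | 0 < v x}

/-- `supp v = v⁻¹(∞)`. -/
def valSupp {R : Type*} [Ring R] {Γ : Type*} [AddCommGroup Γ] [LinearOrder Γ] [IsOrderedAddMonoid Γ]
    (v : R → WithTop Γ) : Set R := {x : R | v x = ⊤}

/-- An ideal `I` of a subring `A` of `R`, as sets. -/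
structure IsIdealOf {R : Type*} [Ring R] (A I : Set R) : Prop where
  subset : I ⊆ A
  zero_mem : (0 : R) ∈ I
  add_mem : ∀ {x y : R}, x ∈ I → y ∈ I → x + y ∈ I
  neg_mem : ∀ {x : R}, x ∈ I → -x ∈ I
  mul_mem_left : ∀ {a x : R}, a ∈ A → x ∈ I → a * x ∈ I
  mul_mem_right : ∀ {x a : R}, x ∈ I → a ∈ A → x * a ∈ I

/-- A `v`-convex ideal: `x ∈ I` and `v y ≥ v x` imply `y ∈ I`. -/
def IsVConvex {R : Type*} [Ring R] {Γ : Type*} [AddCommGroup Γ] [LinearOrder Γ] [IsOrderedAddMonoid Γ]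
    (v : R → WithTop Γ) (I : Set R) : Prop :=
  ∀ x ∈ I, ∀ y : R, v x ≤ v y → y ∈ I

/-!
An odd element squares to zero, so its value is `∞`. Hence the even component `x₀ = x - x₁`
of any `x` satisfies `v x₀ ≥ min (v x) ∞ = v x`, and convexity puts both components of `x`
into the ideal. Total ordering is a property of convex sets alone: if `x ∈ 𝔞 \ 𝔟`, then every
`y ∈ 𝔟` has `v x < v y`, so `y ∈ 𝔞`.
-/

namespace IsValuation

variable {R : Type*} [Ring R] {Γ : Type*} [AddCommGroup Γ] [LinearOrder Γ]
  [IsOrderedAddMonoid Γ] {v : R → WithTop Γ}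

theorem eq_top_of_mul_self_eq_zero (hv : IsValuation v) {x : R} (hx : x * x = 0) :
    v x = ⊤ := by
  have h := hv.map_mul x x
  rw [hx, hv.map_zero, eq_comm, WithTop.add_eq_top, or_self] at h
  exact h

theorem le_map_add_of_eq_top (hv : IsValuation v) (x : R) {y : R} (hy : v y = ⊤) :
    v x ≤ v (x + y) := by
  simpa [hy] using hv.min_le_add x y

end IsValuation

theorem IsSuperring.val_eq_top_of_mem_odd {R : Type*} [Ring R] {𝒜 : ZMod 2 → AddSubgroup R}
    (hR : IsSuperring 𝒜) {Γ : Type*} [AddCommGroup Γ] [LinearOrder Γ] [IsOrderedAddMonoid Γ]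
    {v : R → WithTop Γ} (hv : IsValuation v) {x : R} (hx : x ∈ 𝒜 1) : v x = ⊤ :=
  hv.eq_top_of_mul_self_eq_zero (hR.odd_sq x hx)

namespace IsVConvex

variable {R : Type*} [Ring R] {Γ : Type*} [AddCommGroup Γ] [LinearOrder Γ]
  [IsOrderedAddMonoid Γ] {v : R → WithTop Γ} {a b : Set R}

theorem isGradedSet {𝒜 : ZMod 2 → AddSubgroup R} (hR : IsSuperring 𝒜) (hv : IsValuation v)
    (ha : IsVConvex v a) : IsGradedSet 𝒜 a := by
  intro x hx
  obtain ⟨x0, hx0, x1, hx1, rfl⟩ := hR.decompose x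
  have hv_x1 : v x1 = ⊤ := hR.val_eq_top_of_mem_odd hv hx1
  have hv_x0 : v (x0 + x1) ≤ v x0 := by
    simpa using hv.le_map_add_of_eq_top (x0 + x1)
      (hR.val_eq_top_of_mem_odd hv (neg_mem hx1))
  exact ⟨x0, hx0, x1, hx1, ha _ hx x0 hv_x0, ha _ hx x1 (hv_x1 ▸ le_top), rfl⟩

theorem subset_or_subset (ha : IsVConvex v a) (hb : IsVConvex v b) : a ⊆ b ∨ b ⊆ a := by
  refine or_iff_not_imp_left.mpr fun hab y hy => ?_
  obtain ⟨x, hxa, hxb⟩ := Set.not_subset.mp hab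
  have hlt : v x < v y := lt_of_not_ge fun hle => hxb (hb y hy x hle)
  exact ha x hxa y hlt.le

end IsVConvex

theorem vconvex_graded_and_totally_ordered_general {R : Type u} [Ring R]
    (𝒜 : ZMod 2 → AddSubgroup R) (hR : IsSuperring 𝒜)
    {Γ : Type*} [AddCommGroup Γ] [LinearOrder Γ] [IsOrderedAddMonoid Γ]
    (v : R → WithTop Γ) (hv : IsValuation v) :
    (∀ a : Set R, IsIdealOf (valRing v) a → IsVConvex v a → IsGradedSet 𝒜 a) ∧
      ∀ a b : Set R, IsIdealOf (valRing v) a → IsVConvex v a →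
        IsIdealOf (valRing v) b → IsVConvex v b → a ⊆ b ∨ b ⊆ a :=
  ⟨fun _ _ ha => ha.isGradedSet hR hv, fun _ _ _ ha _ hb => ha.subset_or_subset hb⟩

/-- Every `v`-convex ideal of `A_v` is `ℤ₂`-graded, and the `v`-convex ideals of
`A_v` are totally ordered by inclusion. -/
theorem vconvex_graded_and_totally_ordered {R : Type u} [Ring R] [Nontrivial R]
    (𝒜 : ZMod 2 → AddSubgroup R) (hR : IsSuperring 𝒜)
    {Γ : Type*} [AddCommGroup Γ] [LinearOrder Γ] [IsOrderedAddMonoid Γ]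
    (v : R → WithTop Γ) (hv : IsValuation v) :
    (∀ a : Set R, IsIdealOf (valRing v) a → IsVConvex v a → IsGradedSet 𝒜 a) ∧
      ∀ a b : Set R, IsIdealOf (valRing v) a → IsVConvex v a →
        IsIdealOf (valRing v) b → IsVConvex v b → a ⊆ b ∨ b ⊆ a :=
  vconvex_graded_and_totally_ordered_general 𝒜 hR v hv
end

section
/- Let R be a subsuperring of a superring S, let v be a valuation on R with value group Γ_v, and let w be a valuation on S with value group Γ_w. Then the following are equivalent: (i) w is an extension of v to S, i.e., there is an order isomorphism h from Γ_v onto an ordered subgroup of Γ_w with w(x) = h(v(x)) for all x ∈ R (where h(∞) = ∞); (ii) A_v ⊆ A_w, 𝔭_v = A_v ∩ 𝔭_w, and the restriction of w to R is a valuation on R (i.e., w(R) ∖ {∞} is a subgroup of Γ_w); (iii) A_v ⊆ A_w, 𝔭_v = A_v ∩ 𝔭_w, and supp(v) ⊆ supp(w). -/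
universe u

/-! The conditions `A_v ⊆ A_w` and `𝔭_v = A_v ∩ 𝔭_w` say that `w` sends elements of `v`-value `0`
to `w`-value `0`. As `v` is onto `Γ`, an element of finite `v`-value `γ` can be multiplied by one
of value `-γ` to land in value `0`; hence `w(x)` is then finite and depends only on `v(x)`. This
defines `h : Γ → Δ`, additive by multiplicativity and strictly monotone because `𝔭_v ⊆ 𝔭_w`. The
subgroup condition forces `supp v ⊆ supp w`: if `v(x) = ∞` but `w(x) = δ`, a `y` with
`w(y) = -δ` gives `v(xy) = ∞ > 0` while `w(xy) = 0`. Below, `u` plays the role of `w ∘ ι`. -/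

section

variable {R : Type*} [Ring R] {Γ Δ : Type*}
  [AddCommGroup Γ] [LinearOrder Γ] [IsOrderedAddMonoid Γ] [AddCommGroup Δ]
  {v : R → WithTop Γ} {u : R → WithTop Δ}

theorem IsValuation.exists_add_eq_zero (hv : IsValuation v) {x : R} (hx : v x ≠ ⊤) :
    ∃ z, v x + v z = 0 := by
  obtain ⟨γ, hγ⟩ := WithTop.ne_top_iff_exists.1 hx
  obtain ⟨z, hz⟩ := hv.surjective ((-γ : Γ) : WithTop Γ)
  exact ⟨z, by rw [← hγ, hz, ← WithTop.coe_add, add_neg_cancel, WithTop.coe_zero]⟩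

theorem mem_range_iff_of_eq_map (hv : IsValuation v) {h : Γ →+ Δ}
    (hu : ∀ x, u x = (v x).map h) (δ : Δ) : δ ∈ h.range ↔ ∃ x, u x = δ := by
  constructor
  · rintro ⟨γ, rfl⟩
    obtain ⟨x, hx⟩ := hv.surjective γ
    exact ⟨x, by rw [hu, hx, WithTop.map_coe]⟩
  · rintro ⟨x, hx⟩
    rw [hu] at hx
    obtain ⟨γ, -, hγ⟩ := WithTop.map_eq_some_iff.1 hx
    exact ⟨γ, hγ⟩

variable [LinearOrder Δ] [IsOrderedAddMonoid Δ]

theorem valRing_eq_of_eq_map {h : Γ →+ Δ} (hh : StrictMono h) (hu : ∀ x, u x = (v x).map h) :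
    valRing u = valRing v := by
  ext x
  simpa [valRing, hu] using (WithTop.strictMono_map_iff.2 hh).le_iff_le (a := 0) (b := v x)

theorem valIdeal_eq_of_eq_map {h : Γ →+ Δ} (hh : StrictMono h) (hu : ∀ x, u x = (v x).map h) :
    valIdeal u = valIdeal v := by
  ext x
  simpa [valIdeal, hu] using (WithTop.strictMono_map_iff.2 hh).lt_iff_lt (a := 0) (b := v x)

theorem valSupp_eq_of_eq_map {h : Γ →+ Δ} (hu : ∀ x, u x = (v x).map h) :
    valSupp u = valSupp v := by
  ext x
  simp [valSupp, hu]

theorem add_eq_zero_of_val_add_eq_zero (hv : IsValuation v) (hu : ∀ x y, u (x * y) = u x + u y)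
    (hA : valRing v ⊆ valRing u) (hP : valIdeal v = valRing v ∩ valIdeal u)
    {x z : R} (hxz : v x + v z = 0) : u x + u z = 0 := by
  rw [← hv.map_mul] at hxz
  rw [← hu]
  refine le_antisymm (not_lt.1 fun hpos => ?_) (hA hxz.symm.le)
  have : x * z ∈ valIdeal v := hP ▸ ⟨hxz.symm.le, hpos⟩
  exact (ne_of_lt this) hxz.symm

theorem ne_top_of_val_ne_top (hv : IsValuation v) (hu : ∀ x y, u (x * y) = u x + u y)
    (hA : valRing v ⊆ valRing u) (hP : valIdeal v = valRing v ∩ valIdeal u)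
    {x : R} (hx : v x ≠ ⊤) : u x ≠ ⊤ := by
  obtain ⟨z, hz⟩ := hv.exists_add_eq_zero hx
  have := add_eq_zero_of_val_add_eq_zero hv hu hA hP hz
  exact (WithTop.add_ne_top.1 (this ▸ WithTop.zero_ne_top)).1

theorem eq_of_val_eq (hv : IsValuation v) (hu : ∀ x y, u (x * y) = u x + u y)
    (hA : valRing v ⊆ valRing u) (hP : valIdeal v = valRing v ∩ valIdeal u)
    {x y : R} (hx : v x ≠ ⊤) (hxy : v x = v y) : u x = u y := by
  obtain ⟨z, hz⟩ := hv.exists_add_eq_zero hx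
  have hxz := add_eq_zero_of_val_add_eq_zero hv hu hA hP hz
  have hyz := add_eq_zero_of_val_add_eq_zero hv hu hA hP (hxy ▸ hz)
  exact WithTop.add_right_cancel (WithTop.add_ne_top.1 (hxz ▸ WithTop.zero_ne_top)).2
    (hxz.trans hyz.symm)

theorem exists_strictMono_hom_of_valRing_subset (hv : IsValuation v)
    (hu : ∀ x y, u (x * y) = u x + u y)
    (hA : valRing v ⊆ valRing u) (hP : valIdeal v = valRing v ∩ valIdeal u) :
    ∃ h : Γ →+ Δ, StrictMono h ∧ ∀ x (γ : Γ), v x = γ → u x = h γ := by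
  choose g hg using hv.surjective
  have hfin (γ : Γ) : u (g γ) ≠ ⊤ :=
    ne_top_of_val_ne_top hv hu hA hP (by simp [hg])
  let h₀ (γ : Γ) : Δ := (u (g γ)).untop (hfin γ)
  have hspec (x : R) (γ : Γ) (hx : v x = γ) : u x = h₀ γ := by
    rw [WithTop.coe_untop, eq_of_val_eq hv hu hA hP (by simp [hx]) (hx.trans (hg γ).symm)]
  have hadd (a b : Γ) : h₀ (a + b) = h₀ a + h₀ b := by
    have hab : v (g a * g b) = ↑(a + b) := by rw [hv.map_mul, hg, hg, WithTop.coe_add]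
    exact WithTop.coe_injective <| by
      rw [← hspec _ _ hab, hu, hspec _ _ (hg a), hspec _ _ (hg b), WithTop.coe_add]
  refine ⟨AddMonoidHom.mk' h₀ hadd, fun a b hab => ?_, hspec⟩
  have hpos : g ↑(b - a) ∈ valIdeal v := by
    show (0 : WithTop Γ) < _
    rw [hg]; exact WithTop.coe_lt_coe.2 (sub_pos.2 hab)
  have hpos' : 0 < h₀ (b - a) :=
    WithTop.coe_lt_coe.1 (hspec _ _ (hg _) ▸ (hP ▸ hpos).2)
  calc h₀ a < h₀ (b - a) + h₀ a := lt_add_of_pos_left _ hpos'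
    _ = h₀ b := by rw [← hadd, sub_add_cancel]

theorem valSupp_subset_of_range_eq_addSubgroup (hv : IsValuation v)
    (hu : ∀ x y, u (x * y) = u x + u y) (hP : valIdeal v = valRing v ∩ valIdeal u)
    (H : AddSubgroup Δ) (hH : ∀ δ : Δ, δ ∈ H ↔ ∃ x, u x = δ) :
    valSupp v ⊆ valSupp u := by
  intro x hx
  by_contra hux
  obtain ⟨δ, hδ⟩ := WithTop.ne_top_iff_exists.1 hux
  obtain ⟨y, hy⟩ := (hH (-δ)).1 (neg_mem ((hH δ).2 ⟨x, hδ.symm⟩))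
  have hxy : x * y ∈ valIdeal v := by
    show (0 : WithTop Γ) < _
    rw [hv.map_mul, hx, top_add]; exact WithTop.coe_lt_top 0
  have hxy' : (0 : WithTop Δ) < u (x * y) := (hP ▸ hxy).2
  rw [hu, ← hδ, hy, ← WithTop.coe_add, add_neg_cancel] at hxy'
  exact lt_irrefl _ hxy'

theorem exists_strictMono_eq_map_iff (hv : IsValuation v) (hu : ∀ x y, u (x * y) = u x + u y) :
    (∃ h : Γ →+ Δ, StrictMono h ∧ ∀ x, u x = (v x).map h) ↔
      valRing v ⊆ valRing u ∧ valIdeal v = valRing v ∩ valIdeal u ∧ valSupp v ⊆ valSupp u := by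
  constructor
  · rintro ⟨h, hh, hvu⟩
    rw [valRing_eq_of_eq_map hh hvu, valIdeal_eq_of_eq_map hh hvu, valSupp_eq_of_eq_map hvu]
    exact ⟨subset_rfl, (Set.inter_eq_right.2 fun x (hx : 0 < v x) => hx.le).symm, subset_rfl⟩
  · rintro ⟨hA, hP, hS⟩
    obtain ⟨h, hh, hvu⟩ := exists_strictMono_hom_of_valRing_subset hv hu hA hP
    refine ⟨h, hh, fun x => ?_⟩
    cases hx : v x with
    | top => exact hS hx
    | coe γ => exact hvu x γ hx

end

theorem extension_iff_conditions_general {R S : Type u} [Ring R] [Ring S]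
    (ι : R →+* S)
    {Γ : Type*} [AddCommGroup Γ] [LinearOrder Γ] [IsOrderedAddMonoid Γ] {Δ : Type*} [AddCommGroup Δ] [LinearOrder Δ] [IsOrderedAddMonoid Δ]
    (v : R → WithTop Γ) (hv : IsValuation v)
    (w : S → WithTop Δ) (hw : IsValuation w) :
    ((∃ h : Γ →+ Δ, (∀ a b : Γ, a ≤ b ↔ h a ≤ h b) ∧
        ∀ x : R, w (ι x) = WithTop.map (⇑h) (v x)) ↔
      (valRing v ⊆ ι ⁻¹' valRing w ∧ valIdeal v = valRing v ∩ ι ⁻¹' valIdeal w ∧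
        ∃ H : AddSubgroup Δ, ∀ γ : Δ, γ ∈ H ↔ ∃ x : R, w (ι x) = (γ : WithTop Δ))) ∧
    ((∃ h : Γ →+ Δ, (∀ a b : Γ, a ≤ b ↔ h a ≤ h b) ∧
        ∀ x : R, w (ι x) = WithTop.map (⇑h) (v x)) ↔
      (valRing v ⊆ ι ⁻¹' valRing w ∧ valIdeal v = valRing v ∩ ι ⁻¹' valIdeal w ∧
        valSupp v ⊆ ι ⁻¹' valSupp w)) := by
  have hu : ∀ x y, (w ∘ ι) (x * y) = (w ∘ ι) x + (w ∘ ι) y := fun x y => by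
    simp only [Function.comp_apply, map_mul, hw.map_mul]
  have hord (h : Γ →+ Δ) : (∀ a b, a ≤ b ↔ h a ≤ h b) ↔ StrictMono h :=
    ⟨strictMono_of_le_iff_le, fun hh _ _ => hh.le_iff_le.symm⟩
  simp only [hord]
  have hiii := exists_strictMono_eq_map_iff hv hu
  refine ⟨⟨fun hi => ?_, fun ⟨hA, hP, H, hH⟩ => ?_⟩, hiii⟩
  · obtain ⟨h, hh, hvu⟩ := hi
    obtain ⟨hA, hP, -⟩ := hiii.1 ⟨h, hh, hvu⟩
    exact ⟨hA, hP, h.range, mem_range_iff_of_eq_map hv hvu⟩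
  · exact hiii.2 ⟨hA, hP, valSupp_subset_of_range_eq_addSubgroup hv hu hP H hH⟩

/-- Equivalent characterizations of `w` being an extension of `v` along a
subsuperring inclusion `ι : R → S`: (i) `w ∘ ι = h ∘ v` for an order isomorphism
`h` onto an ordered subgroup; (ii) `(A_v, 𝔭_v) ≼ (A_w, 𝔭_w)` and `w` restricts to
a valuation on `R` (its image minus `∞` is a subgroup); (iii) `(A_v, 𝔭_v) ≼
(A_w, 𝔭_w)` and `supp v ⊆ supp w`. -/
theorem extension_iff_conditions {R S : Type u} [Ring R] [Ring S]
    [Nontrivial R] [Nontrivial S]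
    (𝒜 : ZMod 2 → AddSubgroup R) (ℬ : ZMod 2 → AddSubgroup S)
    (hR : IsSuperring 𝒜) (hS : IsSuperring ℬ)
    (ι : R →+* S) (hinj : Function.Injective ι)
    (hgrade : ∀ (i : ZMod 2) (x : R), x ∈ 𝒜 i ↔ ι x ∈ ℬ i)
    {Γ : Type*} [AddCommGroup Γ] [LinearOrder Γ] [IsOrderedAddMonoid Γ] {Δ : Type*} [AddCommGroup Δ] [LinearOrder Δ] [IsOrderedAddMonoid Δ]
    (v : R → WithTop Γ) (hv : IsValuation v)
    (w : S → WithTop Δ) (hw : IsValuation w) :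
    ((∃ h : Γ →+ Δ, (∀ a b : Γ, a ≤ b ↔ h a ≤ h b) ∧
        ∀ x : R, w (ι x) = WithTop.map (⇑h) (v x)) ↔
      (valRing v ⊆ ι ⁻¹' valRing w ∧ valIdeal v = valRing v ∩ ι ⁻¹' valIdeal w ∧
        ∃ H : AddSubgroup Δ, ∀ γ : Δ, γ ∈ H ↔ ∃ x : R, w (ι x) = (γ : WithTop Δ))) ∧
    ((∃ h : Γ →+ Δ, (∀ a b : Γ, a ≤ b ↔ h a ≤ h b) ∧
        ∀ x : R, w (ι x) = WithTop.map (⇑h) (v x)) ↔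
      (valRing v ⊆ ι ⁻¹' valRing w ∧ valIdeal v = valRing v ∩ ι ⁻¹' valIdeal w ∧
        valSupp v ⊆ ι ⁻¹' valSupp w)) :=
  extension_iff_conditions_general ι v hv w hw
end

section
/- Let T be a superfield and R a subsuperring of T. (1) If x ∈ T₀ satisfies a monic polynomial equation x^n + a_{n-1}x^{n-1} + ⋯ + a_0 = 0 with coefficients a_i ∈ R, then x ∈ A_v for every valuation v on T with R ⊆ A_v. (2) Conversely, if x ∈ T₀ with x ∉ 𝔍_T belongs to A_v for every valuation v on T with R ⊆ A_v, then x satisfies a monic polynomial equation with coefficients in R. -/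
universe u

/-- The canonical superideal `𝔍_R = R·R₁` of a superring. -/
def canonicalSuperideal {R : Type*} [Ring R] (𝒜 : ZMod 2 → AddSubgroup R) : Set R :=
  (AddSubgroup.closure {y : R | ∃ r : R, ∃ s ∈ 𝒜 1, y = r * s} : AddSubgroup R)

/-- A subring of `R` (same identity), as a set. -/
structure IsSubringSet {R : Type*} [Ring R] (A : Set R) : Prop where
  zero_mem : (0 : R) ∈ A
  one_mem : (1 : R) ∈ A
  add_mem : ∀ {x y : R}, x ∈ A → y ∈ A → x + y ∈ A
  neg_mem : ∀ {x : R}, x ∈ A → -x ∈ A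
  mul_mem : ∀ {x y : R}, x ∈ A → y ∈ A → x * y ∈ A

/-!
Part (1) is the ultrametric argument: if `v x < 0`, then `v (x ^ n)` is strictly smaller than the
value of every other term of the equation.

For part (2), the even part `T₀` is a commutative ring and `𝔪 = 𝔍_T ∩ T₀` is a maximal ideal of it.
Sending `t = t₀ + t₁` to `t₀ mod 𝔪` is a ring homomorphism `π` from `T` onto the field `T₀/𝔪`,
because the cross term `s₁ t₁` of a product lies in `𝔍_T`. Valuations of `T₀/𝔪` pull back along
`π`, so `π x` lies in every valuation subring containing `π R = π R₀`, and is therefore integral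
over it. Lifting its equation gives a monic `f` over `R₀` with `f x ∈ 𝔪`; as `𝔪` is nil,
`f ^ N` annihilates `x`.
-/

namespace IsValuation

variable {T : Type*} [Ring T] {Γ : Type*} [AddCommGroup Γ] [LinearOrder Γ] [IsOrderedAddMonoid Γ]
  {v : T → WithTop Γ}

theorem map_pow (hv : IsValuation v) (x : T) (n : ℕ) : v (x ^ n) = n • v x := by
  induction n with
  | zero => simpa using hv.map_one
  | succ n ih => rw [pow_succ, hv.map_mul, ih, succ_nsmul]

theorem map_neg (hv : IsValuation v) (x : T) : v (-x) = v x := by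
  have h : v (-1) + v (-1) = 0 := by rw [← hv.map_mul, neg_mul_neg, one_mul, hv.map_one]
  have h1 : v (-1) = 0 := by
    induction h' : v (-1) using WithTop.recTopCoe with
    | top => simp [h'] at h
    | coe g =>
      rw [h', ← WithTop.coe_add, WithTop.coe_eq_zero, ← two_nsmul] at h
      simpa using h
  rw [← neg_one_mul, hv.map_mul, h1, zero_add]

theorem comp {K : Type*} [Ring K] {w : K → WithTop Γ} (hw : IsValuation w) {f : T →+* K}
    (hf : Function.Surjective f) : IsValuation (w ∘ f) where
  surjective := hw.surjective.comp hf
  map_zero := by simp [hw.map_zero]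
  map_one := by simp [hw.map_one]
  map_mul x y := by simp [hw.map_mul]
  min_le_add x y := by simpa using hw.min_le_add (f x) (f y)

theorem lt_map_sum (hv : IsValuation v) {ι : Type*} {c : WithTop Γ} (hc : c < ⊤) (s : Finset ι)
    (f : ι → T) (h : ∀ i ∈ s, c < v (f i)) : c < v (∑ i ∈ s, f i) := by
  induction s using Finset.cons_induction with
  | empty => simpa [hv.map_zero]
  | cons i s hi ih =>
    rw [Finset.sum_cons]
    exact (lt_min (h i (s.mem_cons_self i))
      (ih fun j hj => h j (Finset.mem_cons_of_mem hj))).trans_le (hv.min_le_add _ _)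

theorem nonneg_of_monic_eq_zero (hv : IsValuation v) {x : T} {n : ℕ} {a : ℕ → T}
    (ha : ∀ i < n, 0 ≤ v (a i)) (h : x ^ n + ∑ i ∈ Finset.range n, a i * x ^ i = 0) :
    0 ≤ v x := by
  by_contra! hx
  obtain ⟨g, hg⟩ := WithTop.ne_top_iff_exists.mp hx.ne_top
  have hg0 : g < 0 := by rw [← hg] at hx; exact_mod_cast hx
  have hxn : v (x ^ n) = ↑(n • g) := by rw [hv.map_pow, ← hg, WithTop.coe_nsmul]
  have hterm : ∀ i ∈ Finset.range n, v (x ^ n) < v (a i * x ^ i) := fun i hi => by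
    have hi : i < n := Finset.mem_range.mp hi
    rw [hxn, hv.map_mul, hv.map_pow, ← hg, ← WithTop.coe_nsmul]
    calc ((n • g : Γ) : WithTop Γ) < ↑(i • g) := by
          have := nsmul_lt_nsmul_left (neg_pos.mpr hg0) hi
          rw [smul_neg, smul_neg, neg_lt_neg_iff] at this
          exact_mod_cast this
      _ ≤ v (a i) + ↑(i • g) := le_add_of_nonneg_left (ha i hi)
  have := hv.lt_map_sum (hxn ▸ WithTop.coe_lt_top _) _ _ hterm
  rw [eq_neg_of_add_eq_zero_right h, hv.map_neg] at this
  exact this.false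

end IsValuation

namespace LinearOrderedCommGroupWithZero

variable {Γ₀ : Type*} [LinearOrderedCommGroupWithZero Γ₀]

/-- `a ↦ -log a`, turning multiplicative valuations into valuations in the sense of
`IsValuation`. -/
noncomputable def toWithTop (a : Γ₀) : WithTop (Additive Γ₀ˣ)ᵒᵈ :=
  if h : a = 0 then ⊤ else WithTop.some (OrderDual.toDual (Additive.ofMul (Units.mk0 a h)))

@[simp] theorem toWithTop_zero : toWithTop (0 : Γ₀) = ⊤ := dif_pos rfl

@[simp] theorem toWithTop_units (u : Γ₀ˣ) :
    toWithTop (u : Γ₀) = WithTop.some (OrderDual.toDual (Additive.ofMul u)) := by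
  rw [toWithTop, dif_neg u.ne_zero, Units.mk0_val]

theorem toWithTop_one : toWithTop (1 : Γ₀) = 0 := by
  simpa using toWithTop_units (1 : Γ₀ˣ)

theorem toWithTop_mul (a b : Γ₀) : toWithTop (a * b) = toWithTop a + toWithTop b := by
  obtain rfl | ⟨u, rfl⟩ := GroupWithZero.eq_zero_or_unit a <;>
  obtain rfl | ⟨w, rfl⟩ := GroupWithZero.eq_zero_or_unit b <;>
  simp [← Units.val_mul, ← WithTop.coe_add]

theorem toWithTop_le_toWithTop {a b : Γ₀} : toWithTop a ≤ toWithTop b ↔ b ≤ a := by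
  obtain rfl | ⟨u, rfl⟩ := GroupWithZero.eq_zero_or_unit a <;>
  obtain rfl | ⟨w, rfl⟩ := GroupWithZero.eq_zero_or_unit b <;>
  simp

theorem toWithTop_antitone : Antitone (toWithTop (Γ₀ := Γ₀)) :=
  fun _ _ h => toWithTop_le_toWithTop.mpr h

theorem toWithTop_surjective : Function.Surjective (toWithTop (Γ₀ := Γ₀)) := by
  intro g
  induction g using WithTop.recTopCoe with
  | top => exact ⟨0, toWithTop_zero⟩
  | coe g => exact ⟨(Additive.toMul (OrderDual.ofDual g) : Γ₀ˣ), toWithTop_units _⟩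

end LinearOrderedCommGroupWithZero

open LinearOrderedCommGroupWithZero in
theorem Valuation.isValuation_toWithTop {K Γ₀ : Type*} [Ring K] [LinearOrderedCommGroupWithZero Γ₀]
    (w : Valuation K Γ₀) (hw : Function.Surjective w) : IsValuation (toWithTop ∘ w) where
  surjective := toWithTop_surjective.comp hw
  map_zero := by simp
  map_one := by simp [toWithTop_one]
  map_mul x y := by simp [toWithTop_mul]
  min_le_add x y := by
    refine le_trans ?_ (toWithTop_antitone (w.map_add x y))
    rcases max_choice (w x) (w y) with h | h <;> rw [h]
    exacts [min_le_left _ _, min_le_right _ _]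

open LinearOrderedCommGroupWithZero in
theorem ValuationSubring.mem_iff_nonneg_toWithTop {K : Type*} [Field K] (B : ValuationSubring K)
    (x : K) : x ∈ B ↔ 0 ≤ toWithTop (B.valuation x) := by
  rw [← toWithTop_one, toWithTop_le_toWithTop, B.valuation_le_one_iff]

theorem Subring.isIntegral_of_forall_mem_valuationSubring {K : Type*} [Field K] (A : Subring K)
    {ξ : K} (h : ∀ B : ValuationSubring K, A ≤ B.toSubring → ξ ∈ B) : IsIntegral A ξ := by
  have hξ : ξ ∈ (integralClosure (Subring.closure (A : Set K)) K).toSubring := by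
    rw [← iInf_valuationSubring_superset, Subring.mem_iInf]
    exact fun B => h B.1 B.2
  rwa [Subring.closure_eq] at hξ

open Polynomial in
theorem Subring.isIntegral_of_isIntegral_map {S K : Type*} [CommRing S] [CommRing K] (f : S →+* K)
    (hf : ∀ z, f z = 0 → IsNilpotent z) (A : Subring S) {x : S}
    (hx : IsIntegral (A.map f) (f x)) : IsIntegral A x := by
  obtain ⟨p, hp, hpx⟩ := hx
  have hlifts : p.map (A.map f).subtype ∈ lifts (f.comp A.subtype) := by
    rw [lifts_iff_coeff_lifts]
    intro n
    obtain ⟨a, ha, hfa⟩ := Subring.mem_map.mp (p.coeff n).2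
    exact ⟨⟨a, ha⟩, by simpa using hfa⟩
  obtain ⟨q, hqp, -, hq⟩ := lifts_and_natDegree_eq_and_monic hlifts (hp.map _)
  have hfq : f (aeval x q) = 0 := by
    rw [aeval_def, hom_eval₂, ← eval_map]
    change eval (f x) (q.map (f.comp A.subtype)) = 0
    rw [hqp, eval_map]
    exact hpx
  obtain ⟨N, hN⟩ := hf _ hfq
  exact ⟨q ^ N, hq.pow N, by rw [← aeval_def, map_pow, hN]⟩

open Polynomial in
theorem IsIntegral.exists_monic_eq_zero {S : Type*} [CommRing S] [Nontrivial S] {A : Subring S}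
    {x : S} (hx : IsIntegral A x) :
    ∃ n : ℕ, 0 < n ∧ ∃ a : ℕ → S, (∀ i < n, a i ∈ A) ∧
      x ^ n + ∑ i ∈ Finset.range n, a i * x ^ i = 0 := by
  obtain ⟨p, hp, hpx⟩ := hx
  refine ⟨p.natDegree, natDegree_pos_of_monic_of_aeval_eq_zero hp hpx, fun i => p.coeff i,
    fun i _ => (p.coeff i).2, ?_⟩
  rw [← hpx, eval₂_eq_sum_range, Finset.sum_range_succ, hp.coeff_natDegree, map_one, one_mul,
    add_comm]
  rfl

theorem mul_mem_canonicalSuperideal {T : Type*} [Ring T] (𝒯 : ZMod 2 → AddSubgroup T) (t : T)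
    {j : T} (hj : j ∈ canonicalSuperideal 𝒯) : t * j ∈ canonicalSuperideal 𝒯 := by
  induction hj using AddSubgroup.closure_induction with
  | mem y hy =>
    obtain ⟨r, s, hs, rfl⟩ := hy
    exact AddSubgroup.subset_closure ⟨t * r, s, hs, (mul_assoc _ _ _).symm⟩
  | zero => rw [mul_zero]; exact zero_mem _
  | add a b _ _ ha hb => rw [mul_add]; exact add_mem ha hb
  | neg a _ ha => rw [mul_neg]; exact neg_mem ha

/-- `T₁²`, so that `𝔍_T = T₁² ⊕ T₁`. -/
def oddProducts {T : Type*} [Ring T] (𝒯 : ZMod 2 → AddSubgroup T) : AddSubgroup T :=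
  AddSubgroup.closure {y : T | ∃ u ∈ 𝒯 1, ∃ s ∈ 𝒯 1, y = u * s}

namespace IsSuperring

variable {T : Type*} [Ring T] {𝒯 : ZMod 2 → AddSubgroup T}

theorem mul_mem_of_add_eq (hT : IsSuperring 𝒯) {i j k : ZMod 2} (hk : i + j = k) {x y : T}
    (hx : x ∈ 𝒯 i) (hy : y ∈ 𝒯 j) : x * y ∈ 𝒯 k :=
  hk ▸ hT.mul_mem hx hy

theorem even_eq_of_add_eq_add (hT : IsSuperring 𝒯) {x₀ x₁ y₀ y₁ : T} (hx₀ : x₀ ∈ 𝒯 0)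
    (hx₁ : x₁ ∈ 𝒯 1) (hy₀ : y₀ ∈ 𝒯 0) (hy₁ : y₁ ∈ 𝒯 1) (h : x₀ + x₁ = y₀ + y₁) : x₀ = y₀ :=
  sub_eq_zero.mp (hT.unique_decomp _ (sub_mem hx₀ hy₀) _ (sub_mem hx₁ hy₁)
    (by rw [sub_add_sub_comm, h, sub_self])).1

theorem odd_mul_comm (hT : IsSuperring 𝒯) {u s : T} (hu : u ∈ 𝒯 1) (hs : s ∈ 𝒯 1) :
    s * u = -(u * s) := by
  have h := hT.odd_sq (u + s) (add_mem hu hs)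
  rw [add_mul, mul_add, mul_add, hT.odd_sq u hu, hT.odd_sq s hs, zero_add, add_zero] at h
  exact eq_neg_of_add_eq_zero_right h

theorem isNilpotent_odd_mul_odd (hT : IsSuperring 𝒯) {u s : T} (hu : u ∈ 𝒯 1) (hs : s ∈ 𝒯 1) :
    IsNilpotent (u * s) :=
  ⟨2, by rw [sq, mul_assoc, ← mul_assoc s, hT.odd_mul_comm hu hs, neg_mul, mul_assoc,
    hT.odd_sq s hs, mul_zero, neg_zero, mul_zero]⟩

theorem oddProducts_le_even (hT : IsSuperring 𝒯) : oddProducts 𝒯 ≤ 𝒯 0 := by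
  rw [oddProducts, AddSubgroup.closure_le]
  rintro _ ⟨u, hu, s, hs, rfl⟩
  exact hT.mul_mem_of_add_eq (by decide) hu hs

theorem isNilpotent_of_mem_oddProducts (hT : IsSuperring 𝒯) {z : T} (hz : z ∈ oddProducts 𝒯) :
    IsNilpotent z := by
  induction hz using AddSubgroup.closure_induction with
  | mem y hy =>
    obtain ⟨u, hu, s, hs, rfl⟩ := hy
    exact hT.isNilpotent_odd_mul_odd hu hs
  | zero => exact IsNilpotent.zero
  | add a b ha _ hna hnb =>
    exact Commute.isNilpotent_add (hT.even_central a (hT.oddProducts_le_even ha) b) hna hnb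
  | neg a _ hna => exact hna.neg

theorem canonicalSuperideal_subset (hT : IsSuperring 𝒯) :
    canonicalSuperideal 𝒯 ⊆ (oddProducts 𝒯 ⊔ 𝒯 1 : AddSubgroup T) := by
  rw [canonicalSuperideal, SetLike.coe_subset_coe, AddSubgroup.closure_le]
  rintro _ ⟨r, s, hs, rfl⟩
  obtain ⟨r₀, hr₀, r₁, hr₁, rfl⟩ := hT.decompose r
  rw [add_mul]
  exact add_mem (AddSubgroup.mem_sup_right (hT.mul_mem_of_add_eq (by decide) hr₀ hs))
    (AddSubgroup.mem_sup_left (AddSubgroup.subset_closure ⟨r₁, hr₁, s, hs, rfl⟩))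

theorem isNilpotent_of_mem_canonicalSuperideal (hT : IsSuperring 𝒯) {z : T} (hz₀ : z ∈ 𝒯 0)
    (hz : z ∈ canonicalSuperideal 𝒯) : IsNilpotent z := by
  obtain ⟨p, hp, q, hq, hpq⟩ := AddSubgroup.mem_sup.mp (hT.canonicalSuperideal_subset hz)
  have hzp : z = p := hT.even_eq_of_add_eq_add hz₀ (zero_mem _) (hT.oddProducts_le_even hp) hq
    (by rw [add_zero, hpq])
  exact hT.isNilpotent_of_mem_oddProducts (hzp ▸ hp)

def evenSubring (hT : IsSuperring 𝒯) : Subring T where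
  carrier := 𝒯 0
  mul_mem' ha hb := hT.mul_mem_of_add_eq (by decide) ha hb
  one_mem' := hT.one_mem
  add_mem' := add_mem
  zero_mem' := zero_mem _
  neg_mem' := neg_mem

instance (hT : IsSuperring 𝒯) : CommRing hT.evenSubring where
  mul_comm a b := Subtype.ext (hT.even_central a a.2 b)

def evenIdeal (hT : IsSuperring 𝒯) : Ideal hT.evenSubring where
  carrier := {s | (s : T) ∈ canonicalSuperideal 𝒯}
  add_mem' := add_mem (S := AddSubgroup T)
  zero_mem' := zero_mem (AddSubgroup.closure _)
  smul_mem' c _ hs := mul_mem_canonicalSuperideal 𝒯 c hs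

theorem isMaximal_evenIdeal (hT : IsSuperring 𝒯) (h1 : (1 : T) ∉ canonicalSuperideal 𝒯)
    (hunit : ∀ x : T, x ∉ canonicalSuperideal 𝒯 → IsUnit x) : hT.evenIdeal.IsMaximal := by
  refine Ideal.isMaximal_iff.mpr ⟨h1, fun J s _ hsI hsJ => ?_⟩
  obtain ⟨u, hu⟩ := hunit s hsI
  obtain ⟨y₀, hy₀, y₁, hy₁, hy⟩ := hT.decompose ↑u⁻¹
  have hsy : (s : T) * y₀ = 1 := by
    refine hT.even_eq_of_add_eq_add (hT.mul_mem_of_add_eq (by decide) s.2 hy₀)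
      (hT.mul_mem_of_add_eq (by decide) s.2 hy₁) hT.one_mem (zero_mem _) ?_
    rw [← mul_add, ← hy, ← hu, Units.mul_inv, add_zero]
  exact (Ideal.eq_top_iff_one J).mp
    (Ideal.eq_top_of_isUnit_mem J hsJ (.of_mul_eq_one ⟨y₀, hy₀⟩ (Subtype.ext hsy)))

theorem isNilpotent_of_mem_evenIdeal (hT : IsSuperring 𝒯) {z : hT.evenSubring}
    (hz : z ∈ hT.evenIdeal) : IsNilpotent z :=
  (IsNilpotent.map_iff (f := hT.evenSubring.subtype) Subtype.val_injective).mp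
    (hT.isNilpotent_of_mem_canonicalSuperideal z.2 hz)

noncomputable def evenProj (hT : IsSuperring 𝒯) (t : T) : hT.evenSubring :=
  ⟨(hT.decompose t).choose, (hT.decompose t).choose_spec.1⟩

theorem evenProj_eq (hT : IsSuperring 𝒯) {t x₀ x₁ : T} (hx₀ : x₀ ∈ 𝒯 0) (hx₁ : x₁ ∈ 𝒯 1)
    (ht : t = x₀ + x₁) : (hT.evenProj t : T) = x₀ := by
  obtain ⟨-, y₁, hy₁, hy⟩ := (hT.decompose t).choose_spec
  exact hT.even_eq_of_add_eq_add (hT.evenProj t).2 hy₁ hx₀ hx₁ (hy ▸ ht)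

theorem sub_evenProj_mem (hT : IsSuperring 𝒯) (t : T) : t - hT.evenProj t ∈ 𝒯 1 := by
  obtain ⟨-, y₁, hy₁, hy⟩ := (hT.decompose t).choose_spec
  have h : t - hT.evenProj t = y₁ := sub_eq_of_eq_add' hy
  rwa [h]

theorem evenProj_coe (hT : IsSuperring 𝒯) (s : hT.evenSubring) : hT.evenProj s = s :=
  Subtype.ext (hT.evenProj_eq s.2 (zero_mem _) (add_zero _).symm)

theorem evenProj_add (hT : IsSuperring 𝒯) (s t : T) :
    hT.evenProj (s + t) = hT.evenProj s + hT.evenProj t :=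
  Subtype.ext <| hT.evenProj_eq (add_mem (hT.evenProj s).2 (hT.evenProj t).2)
    (add_mem (hT.sub_evenProj_mem s) (hT.sub_evenProj_mem t)) (by push_cast; abel)

noncomputable def residueHom (hT : IsSuperring 𝒯) : T →+* hT.evenSubring ⧸ hT.evenIdeal where
  toFun t := Ideal.Quotient.mk _ (hT.evenProj t)
  map_one' := by rw [← hT.evenSubring.coe_one, evenProj_coe, map_one]
  map_zero' := by rw [← hT.evenSubring.coe_zero, evenProj_coe, map_zero]
  map_add' s t := by rw [evenProj_add, map_add]
  map_mul' s t := by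
    have hs₁ := hT.sub_evenProj_mem s
    have ht₁ := hT.sub_evenProj_mem t
    set s₀ := hT.evenProj s
    set t₀ := hT.evenProj t
    have hst : (hT.evenProj (s * t) : T) = s₀ * t₀ + (s - s₀) * (t - t₀) :=
      hT.evenProj_eq (add_mem (s₀ * t₀).2 (hT.mul_mem_of_add_eq (by decide) hs₁ ht₁))
        (add_mem (hT.mul_mem_of_add_eq (by decide) s₀.2 ht₁)
          (hT.mul_mem_of_add_eq (by decide) hs₁ t₀.2)) (by noncomm_ring)
    rw [← map_mul, Ideal.Quotient.eq]
    change ((hT.evenProj (s * t) - s₀ * t₀ : hT.evenSubring) : T) ∈ canonicalSuperideal 𝒯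
    push_cast
    rw [hst, add_sub_cancel_left]
    exact AddSubgroup.subset_closure ⟨_, _, ht₁, rfl⟩

theorem residueHom_coe (hT : IsSuperring 𝒯) (s : hT.evenSubring) :
    hT.residueHom s = Ideal.Quotient.mk _ s :=
  congrArg (Ideal.Quotient.mk _) (hT.evenProj_coe s)

theorem residueHom_surjective (hT : IsSuperring 𝒯) : Function.Surjective hT.residueHom := by
  intro y
  obtain ⟨s, rfl⟩ := Ideal.Quotient.mk_surjective y
  exact ⟨s, hT.residueHom_coe s⟩

def evenPart (hT : IsSuperring 𝒯) {R : Set T} (hR : IsSubringSet R) : Subring hT.evenSubring where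
  carrier := {s | (s : T) ∈ R}
  mul_mem' := hR.mul_mem
  one_mem' := hR.one_mem
  add_mem' := hR.add_mem
  zero_mem' := hR.zero_mem
  neg_mem' := hR.neg_mem

theorem residueHom_mem_map_evenPart (hT : IsSuperring 𝒯) {R : Set T} (hR : IsSubringSet R)
    (hRg : IsGradedSet 𝒯 R) {r : T} (hr : r ∈ R) :
    hT.residueHom r ∈ (hT.evenPart hR).map (Ideal.Quotient.mk _) := by
  obtain ⟨r₀, hr₀, r₁, hr₁, hr₀R, -, rfl⟩ := hRg r hr
  have h : hT.evenProj (r₀ + r₁) = ⟨r₀, hr₀⟩ := Subtype.ext (hT.evenProj_eq hr₀ hr₁ rfl)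
  exact ⟨⟨r₀, hr₀⟩, hr₀R, congrArg (Ideal.Quotient.mk _) h.symm⟩

end IsSuperring

/-- Let `T` be a superfield and `R` a subsuperring of `T`. (1) Every even `x ∈ T₀`
integral over `R` lies in every valuation superring of `T` containing `R`.
(2) Conversely, every even `x ∉ 𝔍_T` lying in every valuation superring of `T`
containing `R` is integral over `R`. -/
theorem valuationRings_and_integral_closure {T : Type u} [Ring T] [Nontrivial T]
    (𝒯 : ZMod 2 → AddSubgroup T) (hT : IsSuperring 𝒯)
    (hfield : (1 : T) ∉ canonicalSuperideal 𝒯 ∧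
      ∀ x : T, x ∉ canonicalSuperideal 𝒯 → IsUnit x)
    (R : Set T) (hR : IsSubringSet R) (hRg : IsGradedSet 𝒯 R) :
    (∀ x ∈ 𝒯 0, ∀ n : ℕ, 0 < n → ∀ a : ℕ → T, (∀ i < n, a i ∈ R) →
        x ^ n + ∑ i ∈ Finset.range n, a i * x ^ i = 0 →
        ∀ (Γ : Type u) [AddCommGroup Γ] [LinearOrder Γ] [IsOrderedAddMonoid Γ] (v : T → WithTop Γ),
          IsValuation v → R ⊆ valRing v → x ∈ valRing v) ∧
      ∀ x ∈ 𝒯 0, x ∉ canonicalSuperideal 𝒯 →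
        (∀ (Γ : Type u) [AddCommGroup Γ] [LinearOrder Γ] [IsOrderedAddMonoid Γ] (v : T → WithTop Γ),
          IsValuation v → R ⊆ valRing v → x ∈ valRing v) →
        ∃ n : ℕ, 0 < n ∧ ∃ a : ℕ → T, (∀ i < n, a i ∈ R) ∧
          x ^ n + ∑ i ∈ Finset.range n, a i * x ^ i = 0 := by
  refine ⟨fun x _ n _ a ha h Γ _ _ _ v hv hRv =>
    hv.nonneg_of_monic_eq_zero (fun i hi => hRv (ha i hi)) h, ?_⟩
  intro x hx₀ _ hxv
  have := hT.isMaximal_evenIdeal hfield.1 hfield.2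
  let := Ideal.Quotient.field hT.evenIdeal
  let A := hT.evenPart hR
  have hxB : ∀ B : ValuationSubring (hT.evenSubring ⧸ hT.evenIdeal),
      A.map (Ideal.Quotient.mk _) ≤ B.toSubring → Ideal.Quotient.mk _ ⟨x, hx₀⟩ ∈ B := by
    intro B hB
    have hv := (B.valuation.isValuation_toWithTop B.valuation_surjective).comp
      hT.residueHom_surjective
    rw [B.mem_iff_nonneg_toWithTop, ← hT.residueHom_coe]
    exact hxv _ _ hv fun r hr =>
      (B.mem_iff_nonneg_toWithTop _).mp (hB (hT.residueHom_mem_map_evenPart hR hRg hr))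
  have hx : IsIntegral A (⟨x, hx₀⟩ : hT.evenSubring) :=
    A.isIntegral_of_isIntegral_map _ (fun _ hz => hT.isNilpotent_of_mem_evenIdeal
      (Ideal.Quotient.eq_zero_iff_mem.mp hz))
      ((A.map _).isIntegral_of_forall_mem_valuationSubring hxB)
  obtain ⟨n, hn, a, ha, h⟩ := hx.exists_monic_eq_zero
  exact ⟨n, hn, fun i => a i, ha, by simpa using congrArg Subtype.val h⟩
end
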